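/- Let A be a perfect skew left brace with ω(A) = 1 and let B be a trivial skew left brace of finite weight. Then ω(A × B) = ω(B). -/
import Mathlib


/-- A skew left brace: `(A,+)` and `(A,∘)` (written `*`) are groups with
`a ∘ (b + c) = a ∘ b - a + a ∘ c`. -/
class SkewBrace (A : Type*) extends AddGroup A, Group A where
  compat : ∀ a b c : A, a * (b + c) = a * b + (-a + a * c)

namespace SkewBrace

variable {A : Type*}

/-- `λ_a (b) = -a + a ∘ b`. -/
def lam [SkewBrace A] (a b : A) : A := -a + a * b

/-- `a * b = λ_a(b) - b = -a + a∘b - b` (the brace star operation). -/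
def star [SkewBrace A] (a b : A) : A := -a + a * b - b

/-- An ideal of a skew left brace: a subgroup of `(A,+)`, normal in `(A,+)` and
`(A,∘)`, and invariant under all `λ_a`. -/
structure Ideal (A : Type*) [SkewBrace A] where
  carrier : Set A
  zero_mem : (0 : A) ∈ carrier
  add_mem : ∀ ⦃a b : A⦄, a ∈ carrier → b ∈ carrier → a + b ∈ carrier
  neg_mem : ∀ ⦃a : A⦄, a ∈ carrier → -a ∈ carrier
  add_conj_mem : ∀ (a : A) ⦃b : A⦄, b ∈ carrier → a + b + -a ∈ carrier
  mul_conj_mem : ∀ (a : A) ⦃b : A⦄, b ∈ carrier → a * b * a⁻¹ ∈ carrier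
  lam_mem : ∀ (a : A) ⦃b : A⦄, b ∈ carrier → lam a b ∈ carrier

/-- The ideal generated by a set, as a set. -/
def genIdeal [SkewBrace A] (S : Set A) : Set A :=
  {x | ∀ I : Ideal A, S ⊆ I.carrier → x ∈ I.carrier}

/-- A maximal ideal: a proper ideal such that the only ideals containing it are
itself and the whole brace. -/
def Ideal.IsMaximal [SkewBrace A] (M : Ideal A) : Prop :=
  M.carrier ≠ Set.univ ∧
    ∀ J : Ideal A, M.carrier ⊆ J.carrier → J.carrier = M.carrier ∨ J.carrier = Set.univ

/-- The radical: the intersection of all maximal ideals (the whole brace if there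
are none). -/
def radical (A : Type*) [SkewBrace A] : Set A :=
  {x | ∀ M : Ideal A, M.IsMaximal → x ∈ M.carrier}

/-- The set of all elements `a * b` (star). -/
def starSet (A : Type*) [SkewBrace A] : Set A := {x | ∃ a b : A, star a b = x}

/-- `A⁽²⁾` as the ideal generated by all `a * b`. -/
def sq (A : Type*) [SkewBrace A] : Set A := genIdeal (starSet A)

/-- `A⁽²⁾` as the additive subgroup generated by all `a * b`. -/
def sqAdd (A : Type*) [SkewBrace A] : Set A := (AddSubgroup.closure (starSet A) : Set A)

open scoped Classical in
/-- The weight of a skew left brace: the minimal number of elements generating it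
as an ideal (with `ω(0) = 1` by convention). -/
noncomputable def weight (A : Type*) [SkewBrace A] : ℕ∞ :=
  if Subsingleton A then 1
  else ⨅ (S : Finset A) (_ : genIdeal (S : Set A) = Set.univ), (S.card : ℕ∞)

/-- Artinian: every descending chain of ideals is eventually stationary. -/
def IsArtinian (A : Type*) [SkewBrace A] : Prop :=
  ∀ f : ℕ → Ideal A, (∀ n, (f (n + 1)).carrier ⊆ (f n).carrier) →
    ∃ N, ∀ n, N ≤ n → (f n).carrier = (f N).carrier

/-- A homomorphism of skew left braces. -/
structure BraceHom (A B : Type*) [SkewBrace A] [SkewBrace B] where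
  toFun : A → B
  map_add' : ∀ x y, toFun (x + y) = toFun x + toFun y
  map_mul' : ∀ x y, toFun (x * y) = toFun x * toFun y

/-- The kernel of a brace homomorphism. -/
def BraceHom.ker {A B : Type*} [SkewBrace A] [SkewBrace B] (f : BraceHom A B) : Set A :=
  {a | f.toFun a = 0}

/-- The socle `Soc(A) = Ker λ ∩ Z(A,+)`. -/
def Soc (A : Type*) [SkewBrace A] : Set A :=
  {a | (∀ b : A, lam a b = b) ∧ ∀ b : A, a + b = b + a}

/-- The annihilator `Ann(A) = Soc(A) ∩ Z(A,∘)`. -/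
def ann (A : Type*) [SkewBrace A] : Set A :=
  {a | (∀ b : A, lam a b = b) ∧ (∀ b : A, a + b = b + a) ∧ (∀ b : A, a * b = b * a)}

/-- A simple skew left brace: it has exactly two ideals, `0` and itself. -/
def IsSimple (A : Type*) [SkewBrace A] : Prop :=
  (∃ x y : A, x ≠ y) ∧ ∀ I : Ideal A, I.carrier = {(0 : A)} ∨ I.carrier = Set.univ

/-- A prime ideal `P`: the quotient `A/P` is a prime brace; internally, for all
ideals `I, J ⊇ P` with `I * J ⊆ P`, one of `I, J` equals `P`. -/
def Ideal.IsPrime [SkewBrace A] (P : Ideal A) : Prop :=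
  ∀ I J : Ideal A, P.carrier ⊆ I.carrier → P.carrier ⊆ J.carrier →
    (∀ i ∈ I.carrier, ∀ j ∈ J.carrier, star i j ∈ P.carrier) →
    I.carrier ⊆ P.carrier ∨ J.carrier ⊆ P.carrier

end SkewBrace

namespace SkewBrace

/-- The direct product of two skew left braces. -/
instance prodBrace (A B : Type*) [SkewBrace A] [SkewBrace B] : SkewBrace (A × B) :=
  { (inferInstance : AddGroup (A × B)), (inferInstance : Group (A × B)) with
    compat := fun a b c =>
      Prod.ext (SkewBrace.compat a.1 b.1 c.1) (SkewBrace.compat a.2 b.2 c.2) }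

section Aux

variable {C : Type*} [SkewBrace C]

lemma mul_zero'' (a : C) : a * (0 : C) = a := by
  have h := compat a (0 : C) (0 : C)
  rw [add_zero] at h
  have h2 : (-a + a * (0:C)) = 0 := (left_eq_add.mp h)
  have := neg_add_eq_zero.mp h2
  exact this.symm

lemma zero_eq_one' : (0 : C) = 1 := by
  have := mul_zero'' (1 : C)
  rwa [one_mul] at this

lemma zero_mul'' (a : C) : (0 : C) * a = a := by
  rw [zero_eq_one', one_mul]

lemma lam_zero' (a : C) : lam (0 : C) a = a := by
  rw [lam, zero_mul'', neg_zero, zero_add]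

open scoped Classical in
lemma weight_of_subsingleton (hC : Subsingleton C) : weight C = 1 := by
  rw [weight, if_pos hC]

open scoped Classical in
lemma weight_of_not_subsingleton (hC : ¬ Subsingleton C) :
    weight C = ⨅ (S : Finset C) (_ : genIdeal (S : Set C) = Set.univ), (S.card : ℕ∞) := by
  rw [weight, if_neg hC]

/-- The zero ideal. -/
def botIdeal (C : Type*) [SkewBrace C] : Ideal C where
  carrier := {0}
  zero_mem := rfl
  add_mem := by rintro a b ha hb; simp_all
  neg_mem := by rintro a ha; simp_all
  add_conj_mem := by rintro a b hb; simp_all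
  mul_conj_mem := by
    rintro a b hb
    simp only [Set.mem_singleton_iff] at hb ⊢
    subst hb
    rw [zero_eq_one']
    group
  lam_mem := by
    rintro a b hb
    simp only [Set.mem_singleton_iff] at hb ⊢
    subst hb
    rw [lam, mul_zero'', neg_add_cancel]

lemma star_mem_right' (I : Ideal C) (a : C) {b : C} (hb : b ∈ I.carrier) :
    star a b ∈ I.carrier := by
  have h1 := I.lam_mem a hb
  have h2 := I.add_mem h1 (I.neg_mem hb)
  simpa [star, lam, sub_eq_add_neg] using h2

lemma star_mem_left' (I : Ideal C) {b : C} (hb : b ∈ I.carrier) (a : C) :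
    star b a ∈ I.carrier := by
  have hc : a⁻¹ * b * (a⁻¹)⁻¹ ∈ I.carrier := I.mul_conj_mem a⁻¹ hb
  have hl : lam a (a⁻¹ * b * (a⁻¹)⁻¹) ∈ I.carrier := I.lam_mem a hc
  have h2 := I.add_conj_mem a hl
  have h3 := I.add_mem (I.neg_mem hb) h2
  have hac : a * (a⁻¹ * b * (a⁻¹)⁻¹) = b * a := by group
  have key : star b a = -b + (a + lam a (a⁻¹ * b * (a⁻¹)⁻¹) + -a) := by
    rw [star, lam, hac, add_neg_cancel_left, sub_eq_add_neg, add_assoc]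
  rw [key]; exact h3

lemma genIdeal_eq_univ_iff {S : Set C} :
    genIdeal S = Set.univ ↔ ∀ I : Ideal C, S ⊆ I.carrier → I.carrier = Set.univ := by
  constructor
  · intro h I hSI
    apply Set.eq_univ_of_forall
    intro y
    exact (Set.eq_univ_iff_forall.mp h y) I hSI
  · intro h
    apply Set.eq_univ_of_forall
    intro x I hSI
    rw [h I hSI]; trivial

lemma nonempty_of_gen {S : Finset C} (hC : ¬ Subsingleton C)
    (h : genIdeal (S : Set C) = Set.univ) : S.Nonempty := by
  rw [Finset.nonempty_iff_ne_empty]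
  rintro rfl
  have := genIdeal_eq_univ_iff.mp h (botIdeal C) (by simp)
  rw [not_subsingleton_iff_nontrivial] at hC
  obtain ⟨z, hz⟩ := exists_ne (0 : C)
  have : z ∈ (botIdeal C).carrier := this ▸ Set.mem_univ z
  exact hz this

lemma weight_le_card {S : Finset C} (hC : ¬ Subsingleton C)
    (h : genIdeal (S : Set C) = Set.univ) : weight C ≤ S.card := by
  rw [weight_of_not_subsingleton hC]
  exact iInf₂_le S h

lemma exists_gen_finset (hw : weight C ≠ ⊤) :
    ∃ S : Finset C, genIdeal (S : Set C) = Set.univ ∧ (S.card : ℕ∞) = weight C := by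
  by_cases hC : Subsingleton C
  · refine ⟨{0}, ?_, ?_⟩
    · apply Set.eq_univ_of_forall
      intro x I hSI
      have : x = 0 := Subsingleton.elim x 0
      rw [this]; exact I.zero_mem
    · rw [weight_of_subsingleton hC]; simp
  · have hw' : (⨅ (S : Finset C) (_ : genIdeal (S : Set C) = Set.univ), (S.card : ℕ∞)) ≠ ⊤ := by
      rwa [weight, if_neg hC] at hw
    have hNne : {k : ℕ | ∃ S : Finset C, genIdeal (S : Set C) = Set.univ ∧ S.card = k}.Nonempty := by
      by_contra hN
      apply hw'
      rw [iInf_eq_top]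
      intro S
      rw [iInf_eq_top]
      intro hS
      exact absurd ⟨S, hS, rfl⟩ (fun h => hN ⟨S.card, h⟩)
    obtain ⟨S, hSgen, hScard⟩ := Nat.sInf_mem hNne
    refine ⟨S, hSgen, ?_⟩
    rw [weight_of_not_subsingleton hC]
    apply le_antisymm
    · refine le_iInf fun T => le_iInf fun hT => ?_
      rw [hScard]
      have hmem : T.card ∈ {k : ℕ | ∃ S : Finset C, genIdeal (S : Set C) = Set.univ ∧ S.card = k} :=
        ⟨T, hT, rfl⟩
      exact_mod_cast Nat.sInf_le hmem
    · exact iInf₂_le S hSgen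

end Aux

section ProdAux

variable {A B : Type*} [SkewBrace A] [SkewBrace B]

open scoped Classical

lemma prod_add' (p q : A × B) : p + q = (p.1 + q.1, p.2 + q.2) := rfl
lemma prod_neg' (p : A × B) : -p = (-p.1, -p.2) := rfl
lemma prod_mul' (p q : A × B) : p * q = (p.1 * q.1, p.2 * q.2) := rfl
lemma prod_inv' (p : A × B) : p⁻¹ = (p.1⁻¹, p.2⁻¹) := rfl
lemma prod_zero' : (0 : A × B) = ((0 : A), (0 : B)) := rfl
lemma prod_lam' (p q : A × B) : lam p q = (lam p.1 q.1, lam p.2 q.2) := rfl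
lemma prod_star' (p q : A × B) : star p q = (star p.1 q.1, star p.2 q.2) := rfl

lemma star_eq_zero_of_trivial (htriv : ∀ a b : B, a * b = a + b) (a b : B) :
    star a b = 0 := by
  rw [star, htriv, sub_eq_add_neg, neg_add_cancel_left, add_neg_cancel]

/-- Pullback of an ideal of `B` to `A × B`. -/
def pullbackIdeal (J : Ideal B) : Ideal (A × B) where
  carrier := {p | p.2 ∈ J.carrier}
  zero_mem := J.zero_mem
  add_mem := fun _ _ ha hb => J.add_mem ha hb
  neg_mem := fun _ ha => J.neg_mem ha
  add_conj_mem := fun a _ hb => J.add_conj_mem a.2 hb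
  mul_conj_mem := fun a _ hb => J.mul_conj_mem a.2 hb
  lam_mem := fun a _ hb => J.lam_mem a.2 hb

/-- First coordinates paired with `0` in an ideal of `A × B`. -/
def fstZeroIdeal (I : Ideal (A × B)) : Ideal A where
  carrier := {x | (x, (0 : B)) ∈ I.carrier}
  zero_mem := I.zero_mem
  add_mem := fun a b ha hb => by simpa [prod_add'] using I.add_mem ha hb
  neg_mem := fun a ha => by simpa [prod_neg'] using I.neg_mem ha
  add_conj_mem := fun a b hb => by
    simpa [prod_add', prod_neg'] using I.add_conj_mem (a, (0 : B)) hb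
  mul_conj_mem := fun a b hb => by
    simpa [prod_mul', prod_inv', zero_eq_one'] using I.mul_conj_mem (a, (0 : B)) hb
  lam_mem := fun a b hb => by
    simpa [prod_lam', lam, zero_eq_one'] using I.lam_mem (a, (0 : B)) hb

/-- Second coordinates paired with `0` in an ideal of `A × B`. -/
def sndZeroIdeal (I : Ideal (A × B)) : Ideal B where
  carrier := {y | ((0 : A), y) ∈ I.carrier}
  zero_mem := I.zero_mem
  add_mem := fun a b ha hb => by simpa [prod_add'] using I.add_mem ha hb
  neg_mem := fun a ha => by simpa [prod_neg'] using I.neg_mem ha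
  add_conj_mem := fun a b hb => by
    simpa [prod_add', prod_neg'] using I.add_conj_mem ((0 : A), a) hb
  mul_conj_mem := fun a b hb => by
    simpa [prod_mul', prod_inv', zero_eq_one'] using I.mul_conj_mem ((0 : A), a) hb
  lam_mem := fun a b hb => by
    simpa [prod_lam', lam, zero_eq_one'] using I.lam_mem ((0 : A), a) hb

/-- First projection of an ideal of `A × B`. -/
def fstProjIdeal (I : Ideal (A × B)) : Ideal A where
  carrier := {x | ∃ y, (x, y) ∈ I.carrier}
  zero_mem := ⟨0, I.zero_mem⟩
  add_mem := by
    rintro a b ⟨ya, ha⟩ ⟨yb, hb⟩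
    exact ⟨ya + yb, by simpa [prod_add'] using I.add_mem ha hb⟩
  neg_mem := by
    rintro a ⟨ya, ha⟩
    exact ⟨-ya, by simpa [prod_neg'] using I.neg_mem ha⟩
  add_conj_mem := by
    rintro c a ⟨ya, ha⟩
    exact ⟨ya, by simpa [prod_add', prod_neg'] using I.add_conj_mem (c, (0 : B)) ha⟩
  mul_conj_mem := by
    rintro c a ⟨ya, ha⟩
    exact ⟨ya, by simpa [prod_mul', prod_inv', zero_eq_one'] using
      I.mul_conj_mem (c, (0 : B)) ha⟩
  lam_mem := by
    rintro c a ⟨ya, ha⟩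
    exact ⟨ya, by simpa [prod_lam', lam_zero'] using I.lam_mem (c, (0 : B)) ha⟩

lemma subsingleton_of_prod (h : Subsingleton (A × B)) : Subsingleton B :=
  ⟨fun b b' => congrArg Prod.snd (Subsingleton.elim ((0 : A), b) ((0 : A), b'))⟩

lemma gen_proj (T : Finset (A × B)) (hT : genIdeal (T : Set (A × B)) = Set.univ) :
    genIdeal ((T.image Prod.snd : Finset B) : Set B) = Set.univ := by
  rw [genIdeal_eq_univ_iff] at hT ⊢
  intro J hJ
  have hsub : (T : Set (A × B)) ⊆ (pullbackIdeal J).carrier := by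
    intro p hp
    exact hJ (by exact_mod_cast Finset.mem_image_of_mem Prod.snd (by exact_mod_cast hp))
  have hu := hT (pullbackIdeal J) hsub
  apply Set.eq_univ_of_forall
  intro y
  have : ((0 : A), y) ∈ (pullbackIdeal J).carrier := hu ▸ Set.mem_univ _
  exact this

lemma weight_le_weight_prod : weight B ≤ weight (A × B) := by
  by_cases hAB : Subsingleton (A × B)
  · have hB := subsingleton_of_prod hAB
    rw [weight_of_subsingleton hAB, weight_of_subsingleton hB]
  · rw [weight_of_not_subsingleton hAB]
    refine le_iInf fun T => le_iInf fun hT => ?_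
    have hTne : T.Nonempty := nonempty_of_gen hAB hT
    by_cases hB : Subsingleton B
    · rw [weight_of_subsingleton hB]
      exact_mod_cast Nat.one_le_cast.mpr hTne.card_pos
    · calc weight B ≤ (T.image Prod.snd).card := weight_le_card hB (gen_proj T hT)
      _ ≤ (T.card : ℕ∞) := by exact_mod_cast Finset.card_image_le

lemma gen_insert (hperf : sq A = Set.univ) (htriv : ∀ a b : B, a * b = a + b)
    (a : A) (ha : ∀ I : Ideal A, a ∈ I.carrier → I.carrier = Set.univ)
    (S : Finset B) (hS : genIdeal (S : Set B) = Set.univ) {x : B} (hx : x ∈ S) :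
    genIdeal ((insert (a, x) ((S.erase x).image (fun s => ((0 : A), s))) :
      Finset (A × B)) : Set (A × B)) = Set.univ := by
  rw [genIdeal_eq_univ_iff]
  intro I hTI
  have hax : (a, x) ∈ I.carrier := hTI (by simp)
  have herase : ∀ s ∈ S.erase x, ((0 : A), s) ∈ I.carrier := by
    intro s hs
    apply hTI
    have h1 : ((0 : A), s) ∈ insert (a, x) ((S.erase x).image fun t => ((0 : A), t)) :=
      Finset.mem_insert_of_mem (Finset.mem_image_of_mem _ hs)
    exact_mod_cast h1
  have hproj : (fstProjIdeal I).carrier = Set.univ := ha _ ⟨x, hax⟩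
  have hall : ∀ z : A, ∃ y, (z, y) ∈ I.carrier := fun z =>
    Set.eq_univ_iff_forall.mp hproj z
  have hstar : starSet A ⊆ (fstZeroIdeal I).carrier := by
    rintro _ ⟨z, z', rfl⟩
    obtain ⟨y, hy⟩ := hall z
    have h1 := star_mem_left' I hy (z', (0 : B))
    rw [prod_star', star_eq_zero_of_trivial htriv] at h1
    exact h1
  have hfz : (fstZeroIdeal I).carrier = Set.univ :=
    genIdeal_eq_univ_iff.mp hperf (fstZeroIdeal I) hstar
  have hA0 : ∀ z : A, (z, (0 : B)) ∈ I.carrier := fun z =>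
    Set.eq_univ_iff_forall.mp hfz z
  have h0x : ((0 : A), x) ∈ I.carrier := by
    have h1 := I.add_mem (hA0 (-a)) hax
    simpa [prod_add'] using h1
  have hsz : (S : Set B) ⊆ (sndZeroIdeal I).carrier := by
    intro s hs
    by_cases hsx : s = x
    · subst hsx; exact h0x
    · exact herase s (Finset.mem_erase.mpr ⟨hsx, by exact_mod_cast hs⟩)
  have hszu : (sndZeroIdeal I).carrier = Set.univ :=
    genIdeal_eq_univ_iff.mp hS (sndZeroIdeal I) hsz
  have hB0 : ∀ y : B, ((0 : A), y) ∈ I.carrier := fun y =>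
    Set.eq_univ_iff_forall.mp hszu y
  apply Set.eq_univ_of_forall
  intro p
  have h1 := I.add_mem (hA0 p.1) (hB0 p.2)
  simpa [prod_add'] using h1

end ProdAux

/-- if `A` is perfect with `ω(A) = 1` and `B` is a trivial skew left
brace of finite weight, then `ω(A × B) = ω(B)`. -/
theorem weight_prod_perfect_trivial (A B : Type*) [SkewBrace A] [SkewBrace B]
    (hperf : sq A = Set.univ) (hwA : weight A = 1)
    (htriv : ∀ a b : B, a * b = a + b) (hwB : weight B ≠ ⊤) :
    weight (A × B) = weight B := by
  classical
  refine le_antisymm ?_ weight_le_weight_prod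
  -- a single ideal-generator of A
  have haex : ∃ a : A, ∀ I : Ideal A, a ∈ I.carrier → I.carrier = Set.univ := by
    by_cases hA : Subsingleton A
    · exact ⟨0, fun I _ => Set.eq_univ_of_forall fun z =>
        (Subsingleton.elim z 0) ▸ I.zero_mem⟩
    · have h1 : weight A ≠ ⊤ := by rw [hwA]; exact ENat.one_ne_top
      obtain ⟨S', hS'gen, hS'card⟩ := exists_gen_finset h1
      rw [hwA] at hS'card
      have : S'.card = 1 := by exact_mod_cast hS'card
      obtain ⟨a, rfl⟩ := Finset.card_eq_one.mp this
      refine ⟨a, fun I haI => genIdeal_eq_univ_iff.mp hS'gen I ?_⟩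
      simpa using haI
  obtain ⟨a, ha⟩ := haex
  obtain ⟨S, hSgen, hScard⟩ := exists_gen_finset hwB
  have hSne : S.Nonempty := by
    by_cases hB : Subsingleton B
    · rw [weight_of_subsingleton hB] at hScard
      have : S.card = 1 := by exact_mod_cast hScard
      exact Finset.card_pos.mp (by omega)
    · exact nonempty_of_gen hB hSgen
  obtain ⟨x, hx⟩ := hSne
  set T : Finset (A × B) := insert (a, x) ((S.erase x).image fun s => ((0 : A), s)) with hT
  have hTgen := gen_insert hperf htriv a ha S hSgen hx
  have hTcard : T.card = S.card := by
    rw [hT, Finset.card_insert_of_notMem, Finset.card_image_of_injective _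
      (fun s t h => by simpa using h), Finset.card_erase_of_mem hx]
    · have : 1 ≤ S.card := Finset.card_pos.mpr ⟨x, hx⟩
      omega
    · intro hmem
      obtain ⟨s, hs, heq⟩ := Finset.mem_image.mp hmem
      have : s = x := congrArg Prod.snd heq
      exact (Finset.mem_erase.mp hs).1 this
  by_cases hAB : Subsingleton (A × B)
  · rw [weight_of_subsingleton hAB, ← hScard]
    exact_mod_cast Nat.one_le_cast.mpr (Finset.card_pos.mpr ⟨x, hx⟩)
  · calc weight (A × B) ≤ T.card := weight_le_card hAB (by exact_mod_cast hTgen)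
    _ = (S.card : ℕ∞) := by exact_mod_cast hTcard
    _ = weight B := hScard

end SkewBrace
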